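/- arXiv:2511.14526 — 5 statements merged into one kernel-verified Lean document; each statement's English description precedes it below -/
import Mathlib

section
/- Let D be a directed graph, s, t vertices, B an st-embracing spanning tree, and write the directed path B[s,t] as arcs f_1, ..., f_k with f_i = (v_{i-1}, v_i), v_0 = s, v_k = t. Suppose T is an st-embracing spanning tree of D such that all arcs of B[s, v_{i-1}] belong to T and f_i ∉ T, for some i ∈ {1, ..., k}. Then there exists an arc e ∈ T such that T' = (T \ {e}) ∪ {f_i} is an st-embracing spanning tree containing all arcs of B[s, v_i]. -/
/-!
Write `f = (a, b)` with `a = v (i - 1)`, `b = v i`. The arc `e` that leaves `T` is always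
incident to `b`, so the arcs of `B[s, a]`, which avoid `b`, survive, and `e` lies on the cycle
that `f` closes in `T`, so the exchange is again a spanning tree. It is chosen so that a directed
`s`-`t` walk survives, and a shortest such walk is a directed path:
* if `(b, a) ∈ T`, then `e = (b, a)`: the arc is reversed;
* if the directed `s`-`t` path `Q` of `T` passes through `b`, it is the arc by which `Q` enters
  `b`, and `B[s, a]`, `f` and the rest of `Q` form the walk;
* otherwise it is the edge at `b` of a tree path from `a` to `b`, and `Q` survives.
-/

/-- A directed path from `s` to `t` using arcs of `T`: a duplicate-free vertex list
starting at `s`, ending at `t`, with every consecutive pair an arc of `T`. -/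
def IsDiPath {V : Type*} [DecidableEq V] (T : Finset (V × V)) (s t : V) (p : List V) : Prop :=
  p.Nodup ∧ p.head? = some s ∧ p.getLast? = some t ∧ p.Chain' (fun a b => (a, b) ∈ T)

/-- A spanning tree `T` is `st`-embracing if the unique tree path from `s` to `t`
is a directed `s`-`t` path; equivalently, `T` contains a directed `s`-`t` path. -/
def StEmbracing {V : Type*} [DecidableEq V] (T : Finset (V × V)) (s t : V) : Prop :=
  ∃ p, IsDiPath T s t p

/-- An arc set is a spanning tree if its underlying undirected graph is a spanning tree:
it is connected, has `|V| - 1` arcs, and contains no loops nor both orientations of an edge. -/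
def IsSpanningTree {V : Type*} [Fintype V] [DecidableEq V] (T : Finset (V × V)) : Prop :=
  (SimpleGraph.fromRel (fun a b => (a, b) ∈ T)).Connected ∧
    T.card = Fintype.card V - 1 ∧ ∀ a ∈ T, a.1 ≠ a.2 ∧ (a.2, a.1) ∉ T

/-- The (undirected) tree path between `u` and `v` in `T`: a duplicate-free vertex list
whose consecutive pairs are arcs of `T` in one of the two orientations. -/
def IsTreePath {V : Type*} [DecidableEq V] (T : Finset (V × V)) (u v : V) (p : List V) : Prop :=
  p.Nodup ∧ p.head? = some u ∧ p.getLast? = some v ∧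
    p.Chain' (fun a b => (a, b) ∈ T ∨ (b, a) ∈ T)

open Relation SimpleGraph Finset

theorem SimpleGraph.reachable_fromRel_of_reflTransGen {V : Type*} {r : V → V → Prop} {x y : V}
    (h : ReflTransGen r x y) : (fromRel r).Reachable x y := by
  induction h with
  | refl => rfl
  | @tail u w _ huw ih =>
    obtain rfl | hne := eq_or_ne u w
    · exact ih
    · exact ih.trans (((fromRel_adj r u w).2 ⟨hne, .inl huw⟩).reachable)

theorem SimpleGraph.Walk.reachable_deleteIncidenceSet {V : Type*} {G : SimpleGraph V} {b x y : V}
    (q : G.Walk x y) (hb : b ∉ q.support) : (G.deleteIncidenceSet b).Reachable x y := by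
  induction q with
  | nil => rfl
  | cons h q ih =>
    rw [support_cons, List.mem_cons, not_or] at hb
    refine Adj.reachable (deleteIncidenceSet_adj.2 ⟨h, Ne.symm hb.1, ?_⟩) |>.trans (ih hb.2)
    exact fun hvb => hb.2 (hvb ▸ q.start_mem_support)

theorem SimpleGraph.Reachable.exists_adj_reachable_deleteIncidenceSet {V : Type*}
    {G : SimpleGraph V} {a b : V} (h : G.Reachable b a) (hne : b ≠ a) :
    ∃ x, G.Adj b x ∧ (G.deleteIncidenceSet b).Reachable x a := by
  obtain ⟨p, hp⟩ := h.exists_isPath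
  cases p with
  | nil => exact absurd rfl hne
  | cons hbx q =>
    exact ⟨_, hbx, q.reachable_deleteIncidenceSet ((Walk.cons_isPath_iff hbx q).1 hp).2⟩

theorem SimpleGraph.Reachable.of_forall_adj {V : Type*} {G G' : SimpleGraph V}
    (h : ∀ x y, G.Adj x y → G'.Reachable x y) {x y : V} (hxy : G.Reachable x y) :
    G'.Reachable x y := by
  obtain ⟨p⟩ := hxy
  induction p with
  | nil => rfl
  | cons hadj _ ih => exact (h _ _ hadj).trans ih

section Digraph

variable {V : Type*} {T T' : Finset (V × V)} {s t c : V} {Q : List V}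

theorem fromRel_adj_of_forall_ne {e : V × V} (hkeep : ∀ r ∈ T, r ≠ e → r ∈ T') {x y : V}
    (hxy : (fromRel fun x y => (x, y) ∈ T).Adj x y) (he : (x, y) ≠ e) (he' : (y, x) ≠ e) :
    (fromRel fun x y => (x, y) ∈ T').Adj x y := by
  rw [fromRel_adj] at hxy ⊢
  exact ⟨hxy.1, hxy.2.imp (hkeep _ · he) (hkeep _ · he')⟩

variable [DecidableEq V]

theorem StEmbracing.of_reflTransGen (h : ReflTransGen (fun x y => (x, y) ∈ T) s t) :
    StEmbracing T s t := by
  induction h with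
  | refl => exact ⟨[s], by simp, rfl, rfl, List.isChain_singleton s⟩
  | @tail u w _ huw ih =>
    obtain ⟨p, hnd, hh, hl, hc⟩ := ih
    by_cases hw : w ∈ p
    · -- the arc `(u, w)` closes a cycle: cut `p` back to `w`
      obtain ⟨p₁, p₂, rfl⟩ := List.append_of_mem hw
      refine ⟨p₁ ++ [w], hnd.sublist (by simp), ?_, by simp, ?_⟩
      · cases p₁ <;> simpa using hh
      · exact (List.append_assoc p₁ [w] p₂ ▸ hc).left_of_append
    · refine ⟨p ++ [w], hnd.append (by simp) (by simpa using hw), ?_, by simp, ?_⟩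
      · simp [List.head?_append, hh]
      · refine hc.append (List.isChain_singleton w) ?_
        simp_all

theorem IsDiPath.reflTransGen_of_mem (hQ : IsDiPath T s t Q) (hc : c ∈ Q) :
    ReflTransGen (fun x y => (x, y) ∈ T ∧ y ≠ c) c t := by
  obtain ⟨hnd, -, hl, hch⟩ := hQ
  obtain ⟨Q₁, Q₂, rfl⟩ := List.append_of_mem hc
  have hcQ₂ : c ∉ Q₂ := (List.nodup_cons.1 hnd.of_append_right).1
  refine List.relationReflTransGen_of_exists_isChain_cons Q₂ ?_ ?_
  · exact hch.right_of_append.imp_of_mem_tail_imp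
      fun x y _ hy hxy => ⟨hxy, fun h => hcQ₂ (h ▸ hy)⟩
  · rw [List.getLast?_append_cons, List.getLast?_eq_getLast_of_ne_nil (List.cons_ne_nil _ _)] at hl
    exact Option.some_injective _ hl

theorem IsDiPath.exists_pred_of_mem (hQ : IsDiPath T s t Q) (hc : c ∈ Q) (hcs : c ≠ s) :
    ∃ w, (w, c) ∈ T ∧ ReflTransGen (fun x y => (x, y) ∈ T ∧ y ≠ c) s w := by
  obtain ⟨hnd, hh, -, hch⟩ := hQ
  obtain ⟨Q₁, Q₂, rfl⟩ := List.append_of_mem hc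
  obtain _ | ⟨x, R⟩ := Q₁
  · exact absurd (by simpa using hh) hcs
  obtain rfl : s = x := by simpa using hh.symm
  have hcQ : c ∉ s :: R := fun h => List.disjoint_of_nodup_append hnd h List.mem_cons_self
  refine ⟨(s :: R).getLast (List.cons_ne_nil _ _), ?_, ?_⟩
  · exact (List.isChain_append.1 hch).2.2 _ (List.getLast?_eq_some_getLast _) c (by simp)
  · exact List.relationReflTransGen_of_exists_isChain_cons R
      (hch.left_of_append.imp_of_mem_imp fun x y _ hy hxy => ⟨hxy, fun h => hcQ (h ▸ hy)⟩) rfl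

theorem IsDiPath.stEmbracing_of_forall_ne {e : V × V} (hQ : IsDiPath T s t Q)
    (hkeep : ∀ r ∈ T, r ≠ e → r ∈ T')
    (he : e.1 ∈ Q → e.2 ∈ Q → ReflTransGen (fun x y => (x, y) ∈ T') s e.2) :
    StEmbracing T' s t := by
  by_cases hQe : e.1 ∈ Q ∧ e.2 ∈ Q
  · -- after reaching `e.2` in `T'`, follow `Q`, which never returns to `e.2`
    refine .of_reflTransGen ((he hQe.1 hQe.2).trans ?_)
    refine ReflTransGen.mono (fun x y (hxy : (x, y) ∈ T ∧ y ≠ e.2) => ?_) _ _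
      (hQ.reflTransGen_of_mem hQe.2)
    exact hkeep _ hxy.1 fun h => hxy.2 (congrArg Prod.snd h)
  · obtain ⟨hnd, hh, hl, hch⟩ := hQ
    refine ⟨Q, hnd, hh, hl, hch.imp_of_mem_imp fun x y hx hy hxy => hkeep _ hxy ?_⟩
    rintro rfl
    exact hQe ⟨hx, hy⟩

theorem exists_incident_reachable_insert_erase {a b : V}
    (hconn : (fromRel fun x y => (x, y) ∈ T).Connected) (hab : a ≠ b) :
    ∃ e ∈ T, (e.1 = b ∨ e.2 = b) ∧
      (fromRel fun x y => (x, y) ∈ insert (a, b) (T.erase e)).Reachable e.1 e.2 := by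
  -- `e` is the edge at `b` of a path from `b` to `a`; the rest of that path avoids `b`
  obtain ⟨x, hbx, hxa⟩ :=
    (hconn.preconnected b a).exists_adj_reachable_deleteIncidenceSet hab.symm
  obtain ⟨e, he, hbe⟩ : ∃ e ∈ T, e = (b, x) ∨ e = (x, b) := by
    rcases ((fromRel_adj _ _ _).1 hbx).2 with h | h
    exacts [⟨_, h, .inl rfl⟩, ⟨_, h, .inr rfl⟩]
  have heb : e.1 = b ∨ e.2 = b := by rcases hbe with rfl | rfl <;> simp
  have hxb : (fromRel fun x y => (x, y) ∈ insert (a, b) (T.erase e)).Reachable x b := by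
    refine (hxa.mono fun u w huw => ?_).trans
      ((fromRel_adj _ _ _).2 ⟨hab, .inl (mem_insert_self _ _)⟩).reachable
    obtain ⟨huw, hu, hw⟩ := deleteIncidenceSet_adj.1 huw
    have hkeep (r) (hr : r ∈ T) (hne : r ≠ e) : r ∈ insert (a, b) (T.erase e) :=
      mem_insert_of_mem (mem_erase_of_ne_of_mem hne hr)
    refine fromRel_adj_of_forall_ne hkeep huw ?_ ?_ <;>
    · rintro rfl
      exact heb.elim (by assumption) (by assumption)
  refine ⟨e, he, heb, ?_⟩
  rcases hbe with rfl | rfl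
  exacts [hxb.symm, hxb]

end Digraph

section Exchange

variable {V : Type*} [Fintype V] [DecidableEq V] {T : Finset (V × V)} {s t : V} {Q : List V}

theorem IsSpanningTree.exchange {e f : V × V} (hT : IsSpanningTree T) (he : e ∈ T)
    (hf : f ∉ T) (hloop : f.1 ≠ f.2) (hrev : (f.2, f.1) ∉ T.erase e)
    (hreach : (fromRel fun x y => (x, y) ∈ insert f (T.erase e)).Reachable e.1 e.2) :
    IsSpanningTree (insert f (T.erase e)) := by
  obtain ⟨hconn, hcard, harcs⟩ := hT
  have hkeep (r) (hr : r ∈ T) (hne : r ≠ e) : r ∈ insert f (T.erase e) :=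
    mem_insert_of_mem (mem_erase_of_ne_of_mem hne hr)
  refine ⟨(connected_iff _).2 ⟨fun x y => ?_, hconn.nonempty⟩, ?_, ?_⟩
  · refine (hconn.preconnected x y).of_forall_adj fun u w huw => ?_
    by_cases hue : (u, w) = e
    · subst hue
      exact hreach
    by_cases hwe : (w, u) = e
    · subst hwe
      exact hreach.symm
    exact (fromRel_adj_of_forall_ne hkeep huw hue hwe).reachable
  · rw [card_insert_of_notMem fun h => hf (mem_of_mem_erase h), card_erase_of_mem he, ← hcard]
    have := card_pos.2 ⟨e, he⟩
    omega
  · intro r hr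
    rcases mem_insert.1 hr with rfl | hr
    · refine ⟨hloop, fun h => ?_⟩
      rcases mem_insert.1 h with h | h
      · exact hloop (congrArg Prod.fst h).symm
      · exact hrev h
    · obtain ⟨hr1, hr2⟩ := harcs r (mem_of_mem_erase hr)
      refine ⟨hr1, fun h => ?_⟩
      rcases mem_insert.1 h with h | h
      · exact hrev (by rw [← h]; exact hr)
      · exact hr2 (mem_of_mem_erase h)

theorem IsDiPath.exists_exchange {a b : V} (hT : IsSpanningTree T) (hQ : IsDiPath T s t Q)
    (hab : a ≠ b) (hf : (a, b) ∉ T)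
    (hsa : ReflTransGen (fun x y => (x, y) ∈ T ∧ x ≠ b ∧ y ≠ b) s a) :
    ∃ e ∈ T, (e.1 = b ∨ e.2 = b) ∧ IsSpanningTree (insert (a, b) (T.erase e)) ∧
      StEmbracing (insert (a, b) (T.erase e)) s t := by
  have hkeep (e r) (hr : r ∈ T) (hne : r ≠ e) : r ∈ insert (a, b) (T.erase e) :=
    mem_insert_of_mem (mem_erase_of_ne_of_mem hne hr)
  have hsa' (e : V × V) (heb : e.1 = b ∨ e.2 = b) :
      ReflTransGen (fun x y => (x, y) ∈ insert (a, b) (T.erase e)) s a := by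
    refine ReflTransGen.mono (fun x y (h : (x, y) ∈ T ∧ x ≠ b ∧ y ≠ b) => ?_) _ _ hsa
    exact hkeep e _ h.1 (by rintro rfl; exact heb.elim h.2.1 h.2.2)
  have hsb' (e : V × V) (heb : e.1 = b ∨ e.2 = b) :
      ReflTransGen (fun x y => (x, y) ∈ insert (a, b) (T.erase e)) s b :=
    (hsa' e heb).tail (mem_insert_self _ _)
  have hfinish (e) (he : e ∈ T) (heb : e.1 = b ∨ e.2 = b) (hrev : (b, a) ∉ T.erase e)
      (hreach : (fromRel fun x y => (x, y) ∈ insert (a, b) (T.erase e)).Reachable e.1 e.2)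
      (hemb : e.1 ∈ Q → e.2 ∈ Q →
        ReflTransGen (fun x y => (x, y) ∈ insert (a, b) (T.erase e)) s e.2) :
      ∃ e ∈ T, (e.1 = b ∨ e.2 = b) ∧ IsSpanningTree (insert (a, b) (T.erase e)) ∧
        StEmbracing (insert (a, b) (T.erase e)) s t :=
    ⟨e, he, heb, hT.exchange he hf hab hrev hreach, hQ.stEmbracing_of_forall_ne (hkeep e) hemb⟩
  by_cases hba : (b, a) ∈ T
  · have hreach : (fromRel fun x y => (x, y) ∈ insert (a, b) (T.erase (b, a))).Reachable b a :=
      ((fromRel_adj _ _ _).2 ⟨hab, .inl (mem_insert_self _ _)⟩).reachable.symm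
    exact hfinish (b, a) hba (.inl rfl) (notMem_erase _ _) hreach fun _ _ => hsa' _ (.inl rfl)
  replace hba (e : V × V) : (b, a) ∉ T.erase e := fun h => hba (mem_of_mem_erase h)
  by_cases hbQ : b ∈ Q
  · have hbs : b ≠ s := by
      rcases hsa.cases_head with rfl | ⟨_, h, _⟩
      exacts [hab.symm, h.2.1.symm]
    obtain ⟨w, hw, hsw⟩ := hQ.exists_pred_of_mem hbQ hbs
    refine hfinish (w, b) hw (.inr rfl) (hba _) ?_ fun _ _ => hsb' _ (.inr rfl)
    refine (reachable_fromRel_of_reflTransGen ?_).symm.trans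
      (reachable_fromRel_of_reflTransGen (hsb' _ (.inr rfl)))
    refine ReflTransGen.mono (fun x y (h : (x, y) ∈ T ∧ y ≠ b) => ?_) _ _ hsw
    exact hkeep _ _ h.1 fun h' => h.2 (congrArg Prod.snd h')
  · obtain ⟨e, he, heb, hreach⟩ := exists_incident_reachable_insert_erase hT.1 hab
    exact hfinish e he heb (hba e) hreach
      fun h₁ h₂ => absurd (heb.elim (· ▸ h₁) (· ▸ h₂)) hbQ

end Exchange

theorem claim_one_step_general {V : Type*} [Fintype V] [DecidableEq V]
    (T : Finset (V × V)) (s t : V)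
    (hT : IsSpanningTree T) (hTemb : StEmbracing T s t)
    (k : ℕ) (v : ℕ → V) (hv0 : v 0 = s)
    (hvinj : Set.InjOn v (Set.Iic k))
    (i : ℕ) (hi1 : 1 ≤ i) (hik : i ≤ k)
    (hpre : ∀ j < i - 1, (v j, v (j + 1)) ∈ T)
    (hfi : (v (i - 1), v i) ∉ T) :
    ∃ e ∈ T,
      IsSpanningTree (insert (v (i - 1), v i) (T.erase e)) ∧
      StEmbracing (insert (v (i - 1), v i) (T.erase e)) s t ∧
      ∀ j < i, (v j, v (j + 1)) ∈ insert (v (i - 1), v i) (T.erase e) := by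
  obtain ⟨Q, hQ⟩ := hTemb
  have hne (j) (hj : j < i) : v j ≠ v i := fun h =>
    hj.ne (hvinj (Set.mem_Iic.2 (by omega)) (Set.mem_Iic.2 hik) h)
  have hprefix :
      ReflTransGen (fun x y => (x, y) ∈ T ∧ x ≠ v i ∧ y ≠ v i) s (v (i - 1)) := by
    rw [← hv0]
    refine ReflTransGen.lift v (r := fun j j' => _) (fun _ _ => id) _ _
      (reflTransGen_of_succ_of_le _ (fun j hj => ?_) (Nat.zero_le _))
    have hj := (Set.mem_Ico.1 hj).2
    simpa using ⟨hpre j hj, hne j (by omega), hne (j + 1) (by omega)⟩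
  obtain ⟨e, he, heb, htree, hemb⟩ := hQ.exists_exchange hT (hne _ (by omega)) hfi hprefix
  refine ⟨e, he, htree, hemb, fun j hj => ?_⟩
  obtain rfl | hj : j = i - 1 ∨ j < i - 1 := by omega
  · rw [Nat.sub_add_cancel hi1]
    exact mem_insert_self _ _
  · refine mem_insert_of_mem (mem_erase.2 ⟨?_, hpre j hj⟩)
    rintro rfl
    exact heb.elim (hne j (by omega)) (hne (j + 1) (by omega))

/-- **Claim 1 of the paper.** Let `B` be an `st`-embracing spanning tree whose
directed `s`-`t` path has vertices `v 0 = s, ..., v k = t` and arcs `f_j = (v (j-1), v j)`.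
If `T` is an `st`-embracing spanning tree containing the arcs of `B[s, v_{i-1}]` but not
`f_i`, then some `e ∈ T` can be exchanged for `f_i` so that `T - e + f_i` is an
`st`-embracing spanning tree containing all arcs of `B[s, v_i]`. -/
theorem claim_one_step {V : Type*} [Fintype V] [DecidableEq V]
    (E B T : Finset (V × V)) (s t : V)
    (hBE : B ⊆ E) (hTE : T ⊆ E)
    (hB : IsSpanningTree B) (hBemb : StEmbracing B s t)
    (hT : IsSpanningTree T) (hTemb : StEmbracing T s t)
    (k : ℕ) (v : ℕ → V) (hv0 : v 0 = s) (hvk : v k = t)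
    (hvinj : Set.InjOn v (Set.Iic k))
    (hBpath : ∀ j < k, (v j, v (j + 1)) ∈ B)
    (i : ℕ) (hi1 : 1 ≤ i) (hik : i ≤ k)
    (hpre : ∀ j < i - 1, (v j, v (j + 1)) ∈ T)
    (hfi : (v (i - 1), v i) ∉ T) :
    ∃ e ∈ T,
      IsSpanningTree (insert (v (i - 1), v i) (T.erase e)) ∧
      StEmbracing (insert (v (i - 1), v i) (T.erase e)) s t ∧
      ∀ j < i, (v j, v (j + 1)) ∈ insert (v (i - 1), v i) (T.erase e) :=
  claim_one_step_general T s t hT hTemb k v hv0 hvinj i hi1 hik hpre hfi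
end

section
/- Let T be a spanning tree of a directed graph D such that T contains a directed path P from s to some vertex x and a directed path Q from x to t. Then the unique tree path T[s,t] is a directed s-t path, i.e., T is st-embracing. -/
namespace List

variable {α : Type*} {R : α → α → Prop}

theorem IsChain.exists_nodup : ∀ {l : List α}, l.IsChain R →
    ∃ q : List α, q.Nodup ∧ q.IsChain R ∧ q.head? = l.head? ∧ q.getLast? = l.getLast?
  | [], _ => ⟨[], nodup_nil, .nil, rfl, rfl⟩
  | a :: l, h => by
    obtain ⟨q, hnd, hq, hhead, hlast⟩ := exists_nodup (l := l) h.tail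
    by_cases ha : a ∈ q
    · obtain ⟨q₁, q₂, rfl⟩ := append_of_mem ha
      refine ⟨a :: q₂, hnd.sublist (sublist_append_right _ _), hq.right_of_append, rfl, ?_⟩
      rw [getLast?_cons (l := l), ← hlast, getLast?_append_of_ne_nil _ (cons_ne_nil a q₂)]
      simp [getLast?_cons]
    · refine ⟨a :: q, nodup_cons.2 ⟨ha, hnd⟩, hq.cons (hhead ▸ h.rel_head?), rfl, ?_⟩
      simp [getLast?_cons, hlast]

variable {l₁ l₂ : List α}

theorem IsChain.append_tail (h₁ : l₁.IsChain R) (h₂ : l₂.IsChain R)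
    (h : l₁.getLast? = l₂.head?) : (l₁ ++ l₂.tail).IsChain R := by
  cases l₂ with
  | nil => simpa using h₁
  | cons b m =>
    refine h₁.append h₂.tail ?_
    rw [h]
    rintro _ ⟨⟩
    exact h₂.rel_head?

theorem head?_append_tail (h : l₁.getLast? = l₂.head?) : (l₁ ++ l₂.tail).head? = l₁.head? := by
  cases l₁ <;> cases l₂ <;> simp_all

theorem getLast?_append_tail (h : l₁.getLast? = l₂.head?) :
    (l₁ ++ l₂.tail).getLast? = l₂.getLast? := by
  cases l₁ <;> cases l₂ <;> simp_all [getLast?_cons]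

end List

theorem stEmbracing_of_paths_through_general {V : Type*} [DecidableEq V]
    (T : Finset (V × V)) (s x t : V)
    (P Q : List V) (hP : IsDiPath T s x P) (hQ : IsDiPath T x t Q) :
    StEmbracing T s t := by
  obtain ⟨-, hPs, hPx, hP⟩ := hP
  obtain ⟨-, hQx, hQt, hQ⟩ := hQ
  have glue : P.getLast? = Q.head? := hPx.trans hQx.symm
  obtain ⟨p, hnd, hp, hs, ht⟩ := (hP.append_tail hQ glue).exists_nodup
  exact ⟨p, hnd, by rw [hs, List.head?_append_tail glue, hPs],
    by rw [ht, List.getLast?_append_tail glue, hQt], hp⟩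

/-- If a spanning tree `T` contains a directed path from `s` to some vertex
`x` and a directed path from `x` to `t`, then the unique tree path from `s` to `t` in `T` is a
directed `s`-`t` path, i.e. `T` is `st`-embracing. -/
theorem stEmbracing_of_paths_through {V : Type*} [Fintype V] [DecidableEq V]
    (T : Finset (V × V)) (hT : IsSpanningTree T) (s x t : V)
    (P Q : List V) (hP : IsDiPath T s x P) (hQ : IsDiPath T x t Q) :
    StEmbracing T s t :=
  stEmbracing_of_paths_through_general T s x t P Q hP hQ
end

section
/- Let D be a directed graph with two st-embracing spanning trees A' and B such that the directed paths A'[s,t] and B[s,t] coincide (as arc sets). Then for every arc e ∈ A' \ B there exists f ∈ B \ A' such that (A' \ {e}) ∪ {f} is a spanning tree whose s-t tree path is still the same directed path; consequently A' can be transformed into B by exactly |B \ A'| single-arc exchanges, all intermediate trees being st-embracing. -/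
/-! Deleting an arc `e` from a spanning tree `A'` leaves a graph with `|V| - 2` arcs, hence
disconnected: its components are those of the two ends of `e`. As `B` is connected, some arc
`f ∈ B` joins these two components; it cannot lie in `A'`, and `A' - e + f` is a spanning tree
again. When `e ∉ B` the arcs of the common path `p` all lie in `A' ∩ B`, so they survive the
exchange. Each exchange lowers `|B \ A'|` by one, and iterating it ends at `B`. -/

open SimpleGraph Finset

namespace SimpleGraph

variable {V : Type*} {G H : SimpleGraph V}

theorem Reachable.of_forall_adj_reachable (h : ∀ x y, G.Adj x y → H.Reachable x y) {u v : V}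
    (huv : G.Reachable u v) : H.Reachable u v := by
  obtain ⟨w⟩ := huv
  induction w with
  | nil => rfl
  | cons hadj _ ih => exact (h _ _ hadj).trans ih

theorem Reachable.reachable_or_of_le_sup_edge {a b u v : V} (hG : G ≤ H ⊔ edge a b)
    (huv : G.Reachable u v) (hu : H.Reachable a u ∨ H.Reachable b u) :
    H.Reachable a v ∨ H.Reachable b v := by
  obtain ⟨w⟩ := huv
  induction w with
  | nil => exact hu
  | @cons u x _ hadj _ ih =>
    apply ih
    rcases (sup_adj _ _ _ _).1 (hG hadj) with hH | hab
    · exact hu.imp (·.trans hH.reachable) (·.trans hH.reachable)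
    · rcases ((edge_adj _ _ _ _).1 hab).1 with ⟨-, rfl⟩ | ⟨-, rfl⟩
      · exact Or.inr .rfl
      · exact Or.inl .rfl

end SimpleGraph

section ArcGraph

variable {V : Type*}

abbrev arcGraph (T : Finset (V × V)) : SimpleGraph V :=
  fromRel fun a b => (a, b) ∈ T

theorem arcGraph_mono {T T' : Finset (V × V)} (h : T ⊆ T') : arcGraph T ≤ arcGraph T' :=
  fun _ _ hadj => (fromRel_adj _ _ _).2 ⟨hadj.1, hadj.2.imp (@h _) (@h _)⟩

theorem arcGraph_adj_of_mem {T : Finset (V × V)} {a : V × V} (ha : a ∈ T) (hne : a.1 ≠ a.2) :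
    (arcGraph T).Adj a.1 a.2 :=
  (fromRel_adj _ _ _).2 ⟨hne, Or.inl ha⟩

theorem arcGraph_reachable_of_mem {T : Finset (V × V)} {a : V × V} (ha : a ∈ T) :
    (arcGraph T).Reachable a.1 a.2 := by
  by_cases hne : a.1 = a.2
  · rw [hne]
  · exact (arcGraph_adj_of_mem ha hne).reachable

theorem exists_mem_not_reachable {T : Finset (V × V)} {H : SimpleGraph V} {a b : V}
    (hT : (arcGraph T).Reachable a b) (hH : ¬H.Reachable a b) :
    ∃ f ∈ T, ¬H.Reachable f.1 f.2 := by
  by_contra! h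
  refine hH (hT.of_forall_adj_reachable fun x y hxy => ?_)
  rcases ((fromRel_adj _ _ _).1 hxy).2 with hT | hT
  · exact h _ hT
  · exact (h _ hT).symm

variable [DecidableEq V]

theorem arcGraph_le_erase_sup_edge (T : Finset (V × V)) (e : V × V) :
    arcGraph T ≤ arcGraph (T.erase e) ⊔ edge e.1 e.2 := by
  intro x y hxy
  obtain ⟨hne, hxy | hyx⟩ := (fromRel_adj _ _ _).1 hxy
  · by_cases h : (x, y) = e
    · subst h; exact Or.inr ((edge_adj _ _ _ _).2 ⟨Or.inl ⟨rfl, rfl⟩, hne⟩)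
    · exact Or.inl ((fromRel_adj _ _ _).2 ⟨hne, Or.inl (mem_erase.2 ⟨h, hxy⟩)⟩)
  · by_cases h : (y, x) = e
    · subst h; exact Or.inr ((edge_adj _ _ _ _).2 ⟨Or.inr ⟨rfl, rfl⟩, hne⟩)
    · exact Or.inl ((fromRel_adj _ _ _).2 ⟨hne, Or.inr (mem_erase.2 ⟨h, hyx⟩)⟩)

theorem card_le_card_add_one_of_connected_arcGraph [Fintype V] {T : Finset (V × V)}
    (h : (arcGraph T).Connected) : Fintype.card V ≤ T.card + 1 := by
  have hedges : (arcGraph T).edgeSet ⊆ ↑(T.image fun a => s(a.1, a.2)) := by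
    rintro ⟨x, y⟩ hxy
    rw [mem_edgeSet, fromRel_adj] at hxy
    rcases hxy.2 with hT | hT
    · exact mem_image.2 ⟨(x, y), hT, rfl⟩
    · exact mem_image.2 ⟨(y, x), hT, Sym2.eq_swap⟩
  calc Fintype.card V = Nat.card V := Nat.card_eq_fintype_card.symm
    _ ≤ Nat.card (arcGraph T).edgeSet + 1 := h.card_vert_le_card_edgeSet_add_one
    _ ≤ (T.image fun a => s(a.1, a.2)).card + 1 := by
      rw [Nat.card_coe_set_eq, ← Set.ncard_coe_finset]
      exact Nat.add_le_add_right (Set.ncard_le_ncard hedges) 1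
    _ ≤ T.card + 1 := Nat.add_le_add_right card_image_le 1

end ArcGraph

section SpanningTree

variable {V : Type*} [Fintype V] [DecidableEq V] {T : Finset (V × V)} {e f : V × V}

theorem IsSpanningTree.reachable_or_reachable_erase (hT : IsSpanningTree T) (v : V) :
    (arcGraph (T.erase e)).Reachable e.1 v ∨ (arcGraph (T.erase e)).Reachable e.2 v :=
  (hT.1.preconnected e.1 v).reachable_or_of_le_sup_edge (arcGraph_le_erase_sup_edge T e)
    (Or.inl .rfl)

theorem IsSpanningTree.not_reachable_erase (hT : IsSpanningTree T) (he : e ∈ T) :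
    ¬(arcGraph (T.erase e)).Reachable e.1 e.2 := by
  intro h12
  have hconn : (arcGraph (T.erase e)).Connected :=
    (connected_iff_exists_forall_reachable _).2
      ⟨e.1, fun v => (hT.reachable_or_reachable_erase v).elim id h12.trans⟩
  have hcard := card_le_card_add_one_of_connected_arcGraph hconn
  have hpos : 0 < T.card := card_pos.2 ⟨e, he⟩
  rw [card_erase_of_mem he] at hcard
  have := hT.2.1
  omega

theorem IsSpanningTree.insert_erase (hT : IsSpanningTree T) (he : e ∈ T)
    (hf : ¬(arcGraph (T.erase e)).Reachable f.1 f.2) :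
    IsSpanningTree (insert f (T.erase e)) := by
  have hne : f.1 ≠ f.2 := fun h => hf (by rw [h])
  have hfT : f ∉ T.erase e := fun h => hf (arcGraph_reachable_of_mem h)
  have hfT' : (f.2, f.1) ∉ T.erase e := fun h => hf (arcGraph_reachable_of_mem h).symm
  have hle := arcGraph_mono (subset_insert f (T.erase e))
  have hadj := arcGraph_adj_of_mem (mem_insert_self f (T.erase e)) hne
  refine ⟨?_, ?_, ?_⟩
  · have h12 : (arcGraph (insert f (T.erase e))).Reachable e.1 e.2 := by
      rcases hT.reachable_or_reachable_erase f.1 with h1 | h1 <;>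
        rcases hT.reachable_or_reachable_erase f.2 with h2 | h2
      · exact absurd (h1.symm.trans h2) hf
      · exact ((h1.mono hle).trans hadj.reachable).trans (h2.mono hle).symm
      · exact ((h2.mono hle).trans hadj.symm.reachable).trans (h1.mono hle).symm
      · exact absurd (h1.symm.trans h2) hf
    exact (connected_iff_exists_forall_reachable _).2 ⟨e.1, fun v =>
      (hT.reachable_or_reachable_erase v).elim (·.mono hle) (h12.trans <| ·.mono hle)⟩
  · have hpos : 0 < T.card := card_pos.2 ⟨e, he⟩
    rw [card_insert_of_notMem hfT, card_erase_of_mem he]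
    have := hT.2.1
    omega
  · intro a ha
    rcases mem_insert.1 ha with rfl | ha
    · refine ⟨hne, fun h => ?_⟩
      rcases mem_insert.1 h with h | h
      · exact hne (congrArg Prod.snd h)
      · exact hfT' h
    · refine ⟨(hT.2.2 a (mem_of_mem_erase ha)).1, fun h => ?_⟩
      rcases mem_insert.1 h with h | h
      · exact hfT' (by rw [← h]; exact ha)
      · exact (hT.2.2 a (mem_of_mem_erase ha)).2 (mem_of_mem_erase h)

theorem IsSpanningTree.exists_exchange {A B : Finset (V × V)} (hA : IsSpanningTree A)
    (hB : (arcGraph B).Connected) (he : e ∈ A \ B) :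
    ∃ f ∈ B \ A, IsSpanningTree (insert f (A.erase e)) := by
  obtain ⟨heA, heB⟩ := mem_sdiff.1 he
  obtain ⟨f, hfB, hf⟩ :=
    exists_mem_not_reachable (hB.preconnected e.1 e.2) (hA.not_reachable_erase heA)
  have hfA : f ∉ A := fun hfA =>
    hf (arcGraph_reachable_of_mem (mem_erase.2 ⟨fun h => heB (h ▸ hfB), hfA⟩))
  exact ⟨f, mem_sdiff.2 ⟨hfB, hfA⟩, hA.insert_erase heA hf⟩

end SpanningTree

section FinsetExchange

variable {α : Type*} [DecidableEq α] {A B : Finset α} {e f : α}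

theorem inter_subset_insert_erase (heB : e ∉ B) : A ∩ B ⊆ insert f (A.erase e) := by
  intro a ha
  obtain ⟨haA, haB⟩ := mem_inter.1 ha
  exact mem_insert_of_mem (mem_erase.2 ⟨by rintro rfl; exact heB haB, haA⟩)

theorem sdiff_insert_erase (heB : e ∉ B) : B \ insert f (A.erase e) = (B \ A).erase f := by
  ext
  simp only [mem_sdiff, mem_insert, mem_erase]
  grind

theorem card_symmDiff_insert_erase (he : e ∈ A) (hf : f ∉ A) :
    (symmDiff A (insert f (A.erase e))).card = 2 := by
  have : symmDiff A (insert f (A.erase e)) = {e, f} := by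
    ext
    simp only [mem_symmDiff, mem_insert, mem_erase, mem_singleton]
    grind
  rw [this, card_pair (ne_of_mem_of_not_mem he hf)]

end FinsetExchange

section Exchange

variable {V : Type*} [DecidableEq V] {s t : V} {p : List V}

theorem IsDiPath.mono {T T' : Finset (V × V)} (h : IsDiPath T s t p) (hT : T ⊆ T') :
    IsDiPath T' s t p :=
  ⟨h.1, h.2.1, h.2.2.1, h.2.2.2.imp fun _ _ hab => hT hab⟩

theorem IsDiPath.inter {T T' : Finset (V × V)} (h : IsDiPath T s t p) (h' : IsDiPath T' s t p) :
    IsDiPath (T ∩ T') s t p := by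
  refine ⟨h.1, h.2.1, h.2.2.1, ?_⟩
  have hT := List.isChain_iff_getElem.1 h.2.2.2
  have hT' := List.isChain_iff_getElem.1 h'.2.2.2
  exact List.isChain_iff_getElem.2 fun i hi => mem_inter.2 ⟨hT i hi, hT' i hi⟩

variable [Fintype V] {E A B : Finset (V × V)}

theorem exists_exchange_preserving_diPath (hA : IsSpanningTree A)
    (hB : (arcGraph B).Connected) (hpA : IsDiPath A s t p) (hpB : IsDiPath B s t p)
    {e : V × V} (he : e ∈ A \ B) :
    ∃ f ∈ B \ A,
      IsSpanningTree (insert f (A.erase e)) ∧ IsDiPath (insert f (A.erase e)) s t p := by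
  obtain ⟨f, hf, hT⟩ := hA.exists_exchange hB he
  exact ⟨f, hf, hT, (hpA.inter hpB).mono (inter_subset_insert_erase (mem_sdiff.1 he).2)⟩

theorem exists_exchange_sequence (hAE : A ⊆ E) (hBE : B ⊆ E) (hA : IsSpanningTree A)
    (hB : IsSpanningTree B) (hpA : IsDiPath A s t p) (hpB : IsDiPath B s t p) :
    ∃ T : ℕ → Finset (V × V), T 0 = A ∧ T ((B \ A).card) = B ∧
      (∀ i ≤ (B \ A).card, T i ⊆ E ∧ IsSpanningTree (T i) ∧ StEmbracing (T i) s t) ∧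
      (∀ i < (B \ A).card, (symmDiff (T i) (T (i + 1))).card = 2) := by
  induction hn : (B \ A).card generalizing A with
  | zero =>
    have hBA : B = A :=
      eq_of_subset_of_card_le (sdiff_eq_empty_iff_subset.1 (card_eq_zero.1 hn))
        (by rw [hA.2.1, hB.2.1])
    subst hBA
    exact ⟨fun _ => B, rfl, rfl, fun _ _ => ⟨hBE, hB, p, hpB⟩,
      fun _ h => absurd h (Nat.not_lt_zero _)⟩
  | succ n ih =>
    obtain ⟨e, he⟩ : (A \ B).Nonempty := by
      rw [← card_pos, card_sdiff_comm (by rw [hA.2.1, hB.2.1]), hn]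
      exact n.succ_pos
    obtain ⟨f, hf, hT, hpT⟩ := exists_exchange_preserving_diPath hA hB.1 hpA hpB he
    obtain ⟨hfB, hfA⟩ := mem_sdiff.1 hf
    obtain ⟨T, hT0, hTn, hTE, hTd⟩ := ih
      (insert_subset (hBE hfB) ((erase_subset e A).trans hAE)) hT hpT
      (by rw [sdiff_insert_erase (mem_sdiff.1 he).2, card_erase_of_mem hf, hn,
        Nat.add_sub_cancel])
    refine ⟨fun | 0 => A | k + 1 => T k, rfl, hTn, ?_, ?_⟩
    · rintro (_ | i) hi
      · exact ⟨hAE, hA, p, hpA⟩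
      · exact hTE i (by omega)
    · rintro (_ | i) hi
      · simpa only [hT0] using card_symmDiff_insert_erase (mem_sdiff.1 he).1 hfA
      · exact hTd i (by omega)

end Exchange

/-- If `A'` and `B` are `st`-embracing spanning trees whose directed
`s`-`t` paths coincide (witnessed by the common path `p`), then every `e ∈ A' \ B` admits
`f ∈ B \ A'` such that `(A' \ {e}) ∪ {f}` is a spanning tree with the same directed `s`-`t`
path; consequently `A'` can be transformed into `B` in exactly `|B \ A'|` single-arc
exchanges through `st`-embracing spanning trees. -/
theorem second_phase {V : Type*} [Fintype V] [DecidableEq V]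
    (E A' B : Finset (V × V)) (s t : V)
    (hAE : A' ⊆ E) (hBE : B ⊆ E)
    (hA : IsSpanningTree A') (hB : IsSpanningTree B)
    (p : List V) (hpA : IsDiPath A' s t p) (hpB : IsDiPath B s t p) :
    (∀ e ∈ A' \ B, ∃ f ∈ B \ A',
        IsSpanningTree (insert f (A'.erase e)) ∧
        IsDiPath (insert f (A'.erase e)) s t p) ∧
    ∃ T : ℕ → Finset (V × V), T 0 = A' ∧ T ((B \ A').card) = B ∧
      (∀ i ≤ (B \ A').card, T i ⊆ E ∧ IsSpanningTree (T i) ∧ StEmbracing (T i) s t) ∧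
      (∀ i < (B \ A').card, (symmDiff (T i) (T (i + 1))).card = 2) :=
  ⟨fun _ he => exists_exchange_preserving_diPath hA hB.1 hpA hpB he,
    exists_exchange_sequence hAE hBE hA hB hpA hpB⟩
end

section
/- In the oriented matroid of affine point configurations in the plane: let u, x, y, v, w, z be six points on the unit circle in this clockwise order, such that the triangles A = {u, v, w} and B = {x, y, z} both contain the origin in their interiors, and the diameter through w meets the circle again at a point strictly between u and x. Then the only pair (a, b) with a ∈ A, b ∈ B such that both (A \ {a}) ∪ {b} and (B \ {b}) ∪ {a} contain the origin in their convex hulls is (a, b) = (v, y). -/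
/-- The point of the unit circle in the plane at angle `θ` (measured counterclockwise). -/
noncomputable def circlePt (θ : ℝ) : ℝ × ℝ := (Real.cos θ, Real.sin θ)

/-!
Points of the unit circle on an arc shorter than `π` lie in an open half-plane through the
origin, so they do not embrace it; points on a closed semicircle lie in a closed half-plane,
so the origin is not interior to their hull. The second fact turns the interior hypotheses into
`au < av + π` and `ay < az + π`. Together with the diameter condition `ax < aw + π`, this puts,
for each of the eight exchanges other than `(v, y)`, one of the two exchanged triangles on an
arc shorter than `π`.
-/

open Set Filter Topology Real

section HalfSpace

variable {E : Type*} [AddCommGroup E] [Module ℝ E]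

theorem zero_notMem_convexHull_of_subset_pos (f : E →ₗ[ℝ] ℝ) {S : Set E}
    (hS : S ⊆ {p | 0 < f p}) : (0 : E) ∉ convexHull ℝ S := fun h0 => by
  simpa using convexHull_min hS (convex_halfSpace_gt f.isLinear 0) h0

theorem zero_notMem_interior_of_subset_nonneg [TopologicalSpace E] [ContinuousSMul ℝ E]
    (f : E →ₗ[ℝ] ℝ) {v : E} (hv : f v < 0) {K : Set E} (hK : K ⊆ {p | 0 ≤ f p}) :
    (0 : E) ∉ interior K := fun h0 => by
  have hray : Tendsto (fun t : ℝ => t • v) (𝓝[>] 0) (𝓝 0) :=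
    ((show Continuous fun t : ℝ => t • v by fun_prop).tendsto' 0 0 (zero_smul ℝ v)).mono_left
      nhdsWithin_le_nhds
  obtain ⟨t, htK, ht⟩ :=
    ((hray.eventually (mem_interior_iff_mem_nhds.mp h0)).and self_mem_nhdsWithin).exists
  have hft : 0 ≤ t * f v := by simpa using hK htK
  exact (mul_neg_of_pos_of_neg ht hv).not_ge hft

end HalfSpace

noncomputable def circleCross (θ : ℝ) : ℝ × ℝ →ₗ[ℝ] ℝ :=
  cos θ • LinearMap.snd ℝ ℝ ℝ - sin θ • LinearMap.fst ℝ ℝ ℝ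

theorem circleCross_circlePt (θ α : ℝ) : circleCross θ (circlePt α) = sin (α - θ) := by
  simp [circleCross, circlePt, sin_sub]
  ring

theorem circlePt_sub_two_pi (α : ℝ) : circlePt (α - 2 * π) = circlePt α := by
  simp [circlePt]

theorem circlePt_add_two_pi (α : ℝ) : circlePt (α + 2 * π) = circlePt α := by
  simp [circlePt]

theorem zero_notMem_convexHull_of_subset_arc {S : Set (ℝ × ℝ)} {lo hi : ℝ}
    (hlt : hi < lo + π) (hS : S ⊆ circlePt '' Icc lo hi) : (0 : ℝ × ℝ) ∉ convexHull ℝ S := by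
  refine zero_notMem_convexHull_of_subset_pos (circleCross ((lo + hi - π) / 2)) ?_
  intro p hp
  obtain ⟨α, ⟨hlo, hhi⟩, rfl⟩ := hS hp
  rw [mem_ofPred_eq, circleCross_circlePt]
  exact sin_pos_of_pos_of_lt_pi (by linarith) (by linarith)

theorem zero_notMem_interior_convexHull_of_subset_semicircle {S : Set (ℝ × ℝ)} {θ : ℝ}
    (hS : S ⊆ circlePt '' Icc θ (θ + π)) : (0 : ℝ × ℝ) ∉ interior (convexHull ℝ S) := by
  refine zero_notMem_interior_of_subset_nonneg (circleCross θ) (v := circlePt (θ - π / 2))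
    (by simp [circleCross_circlePt])
    (convexHull_min ?_ (convex_halfSpace_ge (circleCross θ).isLinear 0))
  intro p hp
  obtain ⟨α, ⟨hlo, hhi⟩, rfl⟩ := hS hp
  rw [mem_ofPred_eq, circleCross_circlePt]
  exact sin_nonneg_of_nonneg_of_le_pi (by linarith) (by linarith)

theorem insert_insert_singleton_subset_image {α β : Type*} (f : α → β) {s : Set α} {a b c : α}
    (ha : a ∈ s) (hb : b ∈ s) (hc : c ∈ s) : ({f a, f b, f c} : Set β) ⊆ f '' s := by
  simp [insert_subset_iff, mem_image_of_mem f, ha, hb, hc]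

theorem zero_notMem_convexHull_of_subset_triple {S : Set (ℝ × ℝ)} (α β γ : ℝ)
    (hγβ : γ ≤ β) (hβα : β ≤ α) (hlt : α < γ + π)
    (hS : S ⊆ {circlePt α, circlePt β, circlePt γ}) :
    (0 : ℝ × ℝ) ∉ convexHull ℝ S :=
  zero_notMem_convexHull_of_subset_arc hlt <|
    hS.trans (insert_insert_singleton_subset_image _ ⟨hγβ.trans hβα, le_rfl⟩ ⟨hγβ, hβα⟩
      ⟨le_rfl, hγβ.trans hβα⟩)

theorem lt_add_pi_of_zero_mem_interior_convexHull {α β γ : ℝ} (hβα : β ≤ α) (hγβ : γ ≤ β)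
    (hαγ : α - 2 * π ≤ γ)
    (h0 : (0 : ℝ × ℝ) ∈ interior (convexHull ℝ {circlePt α, circlePt β, circlePt γ})) :
    α < β + π ∧ β < γ + π := by
  constructor
  · by_contra! h
    refine zero_notMem_interior_convexHull_of_subset_semicircle (θ := α - 2 * π) ?_ h0
    rw [← circlePt_sub_two_pi α]
    exact insert_insert_singleton_subset_image _ ⟨le_rfl, by linarith⟩
      ⟨by linarith, by linarith⟩ ⟨hαγ, by linarith⟩
  · by_contra! h
    refine zero_notMem_interior_convexHull_of_subset_semicircle (θ := γ + π) ?_ h0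
    rw [← circlePt_add_two_pi γ]
    exact insert_insert_singleton_subset_image _ ⟨by linarith, by linarith⟩ ⟨h, by linarith⟩
      ⟨by linarith, by linarith⟩

theorem unique_symmetric_exchange_general (au ax ay av aw az : ℝ)
    (h2 : ay < ax) (h3 : av < ay) (h4 : aw < av) (h5 : az < aw)
    (h6 : au - 2 * Real.pi < az)
    (hdiam : ax < aw + Real.pi ∧ aw + Real.pi < au)
    (A B : Set (ℝ × ℝ))
    (hA : A = {circlePt au, circlePt av, circlePt aw})
    (hB : B = {circlePt ax, circlePt ay, circlePt az})
    (h0A : (0 : ℝ × ℝ) ∈ interior (convexHull ℝ A))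
    (h0B : (0 : ℝ × ℝ) ∈ interior (convexHull ℝ B)) :
    ∀ a ∈ A, ∀ b ∈ B,
      (0 : ℝ × ℝ) ∈ convexHull ℝ (insert b (A \ {a})) →
      (0 : ℝ × ℝ) ∈ convexHull ℝ (insert a (B \ {b})) →
      a = circlePt av ∧ b = circlePt ay := by
  subst hA hB
  have huv := (lt_add_pi_of_zero_mem_interior_convexHull (by linarith) h4.le (by linarith) h0A).1
  have hyz := (lt_add_pi_of_zero_mem_interior_convexHull h2.le (by linarith) (by linarith) h0B).2
  intro a ha b hb hab hba
  simp only [mem_insert_iff, mem_singleton_iff] at ha hb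
  rcases ha with rfl | rfl | rfl <;> rcases hb with rfl | rfl | rfl
  · exact absurd hab <| zero_notMem_convexHull_of_subset_triple ax av aw
      (by linarith) (by linarith) hdiam.1 (by grind)
  · exact absurd hab <| zero_notMem_convexHull_of_subset_triple ay av aw
      (by linarith) (by linarith) (by linarith) (by grind)
  · exact absurd hab <| zero_notMem_convexHull_of_subset_triple av aw az
      (by linarith) (by linarith) (by linarith) (by grind)
  · exact absurd hba <| zero_notMem_convexHull_of_subset_triple ay av az
      (by linarith) (by linarith) hyz (by grind)
  · exact ⟨rfl, rfl⟩
  · exact absurd hba <| zero_notMem_convexHull_of_subset_triple ax ay av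
      (by linarith) (by linarith) (by linarith) (by grind)
  · exact absurd hab <| zero_notMem_convexHull_of_subset_triple au ax av
      (by linarith) (by linarith) huv (by grind)
  · exact absurd hab <| zero_notMem_convexHull_of_subset_triple au ay av
      (by linarith) (by linarith) huv (by grind)
  · exact absurd hba <| zero_notMem_convexHull_of_subset_triple ax ay aw
      (by linarith) (by linarith) hdiam.1 (by grind)

/-- **Example 2.** Let `u, x, y, v, w, z` be six points on the unit circle in
this clockwise order (angles `au > ax > ay > av > aw > az > au - 2π`), such that the
triangles `A = {u, v, w}` and `B = {x, y, z}` both contain the origin in their interiors and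
the diameter through `w` meets the circle again at a point strictly between `u` and `x`
(`ax < aw + π < au`). Then the only pair `(a, b)` with `a ∈ A`, `b ∈ B` such that both
`(A \ {a}) ∪ {b}` and `(B \ {b}) ∪ {a}` contain the origin in their convex hulls is
`(a, b) = (v, y)`. -/
theorem unique_symmetric_exchange (au ax ay av aw az : ℝ)
    (h1 : ax < au) (h2 : ay < ax) (h3 : av < ay) (h4 : aw < av) (h5 : az < aw)
    (h6 : au - 2 * Real.pi < az)
    (hdiam : ax < aw + Real.pi ∧ aw + Real.pi < au)
    (A B : Set (ℝ × ℝ))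
    (hA : A = {circlePt au, circlePt av, circlePt aw})
    (hB : B = {circlePt ax, circlePt ay, circlePt az})
    (h0A : (0 : ℝ × ℝ) ∈ interior (convexHull ℝ A))
    (h0B : (0 : ℝ × ℝ) ∈ interior (convexHull ℝ B)) :
    ∀ a ∈ A, ∀ b ∈ B,
      (0 : ℝ × ℝ) ∈ convexHull ℝ (insert b (A \ {a})) →
      (0 : ℝ × ℝ) ∈ convexHull ℝ (insert a (B \ {b})) →
      a = circlePt av ∧ b = circlePt ay :=
  unique_symmetric_exchange_general au ax ay av aw az h2 h3 h4 h5 h6 hdiam A B hA hB h0A h0B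
end

section
/- Let T be a spanning tree of a directed graph D whose unique tree path T[s,t] is a directed s-t path with vertex sequence s = w_0, w_1, ..., w_k = t, and let f = (v_{i-1}, v_i) be an arc not in T. If the arc e removed from the tree path T[v_{i-1}, v_i] is an arc of T[s,t] entering some vertex w_j that equals v_j on the path, and T contains the directed path from s to v_j through the arcs f_1,...,f_{j-1}, f along B, then (T \ {e}) ∪ {f} contains both a directed path from s to v_j and the directed path T[v_j, t]; hence it is st-embracing. -/
namespace IsDiPath

variable {V : Type*} [DecidableEq V] {T : Finset (V × V)} {s t : V} {p : List V}

lemma mono_s15 (hp : IsDiPath T s t p) {T' : Finset (V × V)} (hTT' : T ⊆ T') :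
    IsDiPath T' s t p :=
  ⟨hp.1, hp.2.1, hp.2.2.1, hp.2.2.2.imp fun _ _ h => hTT' h⟩

lemma reflTransGen (hp : IsDiPath T s t p) :
    Relation.ReflTransGen (fun a b => (a, b) ∈ T) s t := by
  obtain ⟨p, rfl⟩ := List.head?_eq_some_iff.mp hp.2.1
  exact List.relationReflTransGen_of_exists_isChain_cons p hp.2.2.2 <|
    Option.some_inj.mp ((List.getLast?_eq_some_getLast _).symm.trans hp.2.2.1)

lemma cons (hp : IsDiPath T s t p) {x : V} (hx : x ∉ p) (hxs : (x, s) ∈ T) :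
    IsDiPath T x t (x :: p) := by
  obtain ⟨p, rfl⟩ := List.head?_eq_some_iff.mp hp.2.1
  exact ⟨List.nodup_cons.mpr ⟨hx, hp.1⟩, rfl, List.getLast?_cons_cons.trans hp.2.2.1,
    List.isChain_cons_cons.mpr ⟨hxs, hp.2.2.2⟩⟩

lemma suffix (hp : IsDiPath T s t p) {x : V} (hx : x ∈ p) : ∃ q, IsDiPath T x t q := by
  obtain ⟨a, c, rfl⟩ := List.append_of_mem hx
  have hsuf : x :: c <:+ a ++ x :: c := List.suffix_append a _
  refine ⟨x :: c, hp.1.sublist hsuf.sublist, rfl, ?_, hp.2.2.2.suffix hsuf⟩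
  rw [← hp.2.2.1, List.getLast?_append_of_ne_nil _ (List.cons_ne_nil _ _)]

lemma erase_of_snd_eq (hp : IsDiPath T s t p) {e : V × V} (he : e.2 = s) :
    IsDiPath (T.erase e) s t p := by
  obtain ⟨p, rfl⟩ := List.head?_eq_some_iff.mp hp.2.1
  have hsp : s ∉ p := (List.nodup_cons.mp hp.1).1
  refine ⟨hp.1, hp.2.1, hp.2.2.1, hp.2.2.2.imp_of_mem_tail_imp fun a b _ hb hab => ?_⟩
  refine Finset.mem_erase.mpr ⟨fun hbe => hsp ?_, hab⟩
  rw [← he, ← hbe]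
  exact hb

end IsDiPath

lemma exists_isDiPath_of_reflTransGen {V : Type*} [DecidableEq V] {T : Finset (V × V)}
    {s t : V} (h : Relation.ReflTransGen (fun a b => (a, b) ∈ T) s t) :
    ∃ p, IsDiPath T s t p := by
  induction h using Relation.ReflTransGen.head_induction_on with
  | refl => exact ⟨[t], List.nodup_singleton t, rfl, rfl, List.isChain_singleton t⟩
  | @head a _ hac _ ih =>
    obtain ⟨q, hq⟩ := ih
    by_cases ha : a ∈ q
    · exact hq.suffix ha
    · exact ⟨_, hq.cons ha hac⟩

lemma Relation.ReflTransGen.of_forall_lt_succ {α : Type*} {r : α → α → Prop} (v : ℕ → α)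
    (n : ℕ) (h : ∀ l < n, r (v l) (v (l + 1))) : Relation.ReflTransGen r (v 0) (v n) := by
  induction n with
  | zero => exact .refl
  | succ n ih =>
    exact (ih fun l hl => h l (by omega)).tail (h n n.lt_succ_self)

theorem reroute_is_embracing_general {V : Type*} [DecidableEq V]
    (T : Finset (V × V))
    (s t : V) (p : List V) (hp : IsDiPath T s t p)
    (v : ℕ → V) (hv0 : v 0 = s) (i j : ℕ)
    (f : V × V) (hf : f = (v (i - 1), v i))
    (e : V × V) (hep : e ∈ p.zip p.tail) (hein : e.2 = v j)
    (hene : ∀ l < j, e ≠ (v l, v (l + 1)))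
    (harcs : ∀ l < j, l + 1 ≠ i → (v l, v (l + 1)) ∈ T) :
    (∀ l < j, (v l, v (l + 1)) ∈ insert f (T.erase e)) ∧
    (∃ q, IsDiPath (insert f (T.erase e)) (v j) t q) ∧
    StEmbracing (insert f (T.erase e)) s t := by
  have hB : ∀ l < j, (v l, v (l + 1)) ∈ insert f (T.erase e) := by
    intro l hl
    by_cases hli : l + 1 = i
    · rw [hf, ← hli, Nat.add_sub_cancel]
      exact Finset.mem_insert_self _ _
    · exact Finset.mem_insert_of_mem (Finset.mem_erase.mpr ⟨(hene l hl).symm, harcs l hl hli⟩)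
  have hvj : v j ∈ p := hein ▸ List.mem_of_mem_tail (List.of_mem_zip hep).2
  obtain ⟨q, hq⟩ := hp.suffix hvj
  have hq' := (hq.erase_of_snd_eq hein).mono_s15 (Finset.subset_insert f _)
  refine ⟨hB, ⟨q, hq'⟩, exists_isDiPath_of_reflTransGen ?_⟩
  exact hv0 ▸ (Relation.ReflTransGen.of_forall_lt_succ v j hB).trans hq'.reflTransGen

/-- Let `T` be an `st`-embracing spanning tree with directed `s`-`t` path
`p`, let `f = (v (i-1), v i) ∉ T`, and let `e ∈ T` be an arc of `p` entering the vertex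
`v j` (with `i ≤ j`), distinct from the arcs `(v l, v (l+1))`, `l < j`, all of which except
`f` lie in `T`. Then `(T \ {e}) ∪ {f}` contains all arcs of the directed path
`B[s, v_j] = (v 0, v 1), ..., (v (j-1), v j)` as well as a directed path from `v j` to `t`
(the path `T[v_j, t]`); hence `(T \ {e}) ∪ {f}` is `st`-embracing. -/
theorem reroute_is_embracing {V : Type*} [Fintype V] [DecidableEq V]
    (E T : Finset (V × V)) (hTE : T ⊆ E) (hT : IsSpanningTree T)
    (s t : V) (p : List V) (hp : IsDiPath T s t p)
    (v : ℕ → V) (hv0 : v 0 = s) (i j : ℕ) (hi : 1 ≤ i) (hij : i ≤ j)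
    (hvinj : Set.InjOn v (Set.Iic j))
    (f : V × V) (hf : f = (v (i - 1), v i)) (hfT : f ∉ T) (hfE : f ∈ E)
    (e : V × V) (heT : e ∈ T) (hep : e ∈ p.zip p.tail) (hein : e.2 = v j)
    (hene : ∀ l < j, e ≠ (v l, v (l + 1)))
    (harcs : ∀ l < j, l + 1 ≠ i → (v l, v (l + 1)) ∈ T) :
    (∀ l < j, (v l, v (l + 1)) ∈ insert f (T.erase e)) ∧
    (∃ q, IsDiPath (insert f (T.erase e)) (v j) t q) ∧
    StEmbracing (insert f (T.erase e)) s t :=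
  reroute_is_embracing_general T s t p hp v hv0 i j f hf e hep hein hene harcs
end
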